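/- Let ρ be an n×n density matrix with diagonal-entry vector d, and let p_1, …, p_k be the outcome distributions of k von Neumann measurements on ρ. Then C_r(ρ) ≥ S(d) − S(d ∨ p_1 ∨ … ∨ p_k), and these bounds are monotonically nondecreasing in k: S(d ∨ p_1 ∨ … ∨ p_k) ≤ S(d ∨ p_1 ∨ … ∨ p_{k−1}) ≤ … ≤ S(d ∨ p_1). -/

import Mathlib

open Matrix Finset ComplexOrder

/-- The vector `x` sorted in descending order. -/
noncomputable def sortDesc {n : ℕ} (x : Fin n → ℝ) : Fin n → ℝ :=
  fun i => x (Tuple.sort x i.rev)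

/-- The sum of the `k` largest entries of `x`. -/
noncomputable def topSum {n : ℕ} (x : Fin n → ℝ) (k : ℕ) : ℝ :=
  ∑ i ∈ Finset.univ.filter (fun i : Fin n => (i : ℕ) < k), sortDesc x i

/-- `Maj b a` means `b ≺ a`, i.e. `a` majorizes `b`. -/
def Maj {n : ℕ} (b a : Fin n → ℝ) : Prop := ∀ k : ℕ, topSum b k ≤ topSum a k

/-- `p` is a probability vector. -/
def IsProbVec {n : ℕ} (p : Fin n → ℝ) : Prop := (∀ i, 0 ≤ p i) ∧ ∑ i, p i = 1

/-- Shannon entropy (base 2). -/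
noncomputable def shannon {ι : Type*} [Fintype ι] (p : ι → ℝ) : ℝ :=
  -∑ i, p i * Real.logb 2 (p i)

/-- A von Neumann measurement: an orthonormal basis of `ℂⁿ`. -/
def IsONB {n : ℕ} (ψ : Fin n → (Fin n → ℂ)) : Prop :=
  ∀ i j, star (ψ i) ⬝ᵥ ψ j = if i = j then 1 else 0

/-- Outcome distribution of the measurement `ψ` on the state `ρ`. -/
noncomputable def outcome {n : ℕ} (ρ : Matrix (Fin n) (Fin n) ℂ)
    (ψ : Fin n → (Fin n → ℂ)) : Fin n → ℝ :=
  fun i => (star (ψ i) ⬝ᵥ (ρ *ᵥ ψ i)).re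

/-- Vector of diagonal entries of `ρ` (real parts). -/
noncomputable def diagVec {n : ℕ} (ρ : Matrix (Fin n) (Fin n) ℂ) : Fin n → ℝ :=
  fun i => (ρ i i).re

/-- `c` is the majorization join of `a` and `b`. -/
def IsMajJoin {n : ℕ} (a b c : Fin n → ℝ) : Prop :=
  IsProbVec c ∧ Maj a c ∧ Maj b c ∧
    ∀ c', IsProbVec c' → Maj a c' → Maj b c' → Maj c c'

/-- `c` is the majorization meet of the set `X`. -/
def IsMajMeet {n : ℕ} (X : Set (Fin n → ℝ)) (c : Fin n → ℝ) : Prop :=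
  IsProbVec c ∧ (∀ p ∈ X, Maj c p) ∧
    ∀ c', IsProbVec c' → (∀ p ∈ X, Maj c' p) → Maj c' c


noncomputable def sdPerm {n : ℕ} (x : Fin n → ℝ) : Equiv.Perm (Fin n) :=
  Fin.revPerm.trans (Tuple.sort x)

lemma sortDesc_eq {n : ℕ} (x : Fin n → ℝ) : sortDesc x = fun i => x (sdPerm x i) := rfl

lemma sortDesc_antitone {n : ℕ} (x : Fin n → ℝ) : Antitone (sortDesc x) := by
  intro i j hij
  exact Tuple.monotone_sort x (by simpa [Fin.rev_le_rev] using hij)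

lemma sum_sortDesc {n : ℕ} (x : Fin n → ℝ) (g : ℝ → ℝ) :
    ∑ i, g (sortDesc x i) = ∑ i, g (x i) := by
  rw [sortDesc_eq]
  exact Equiv.sum_comp (sdPerm x) (fun i => g (x i))

abbrev Fk (n k : ℕ) : Finset (Fin n) := Finset.univ.filter (fun i : Fin n => (i : ℕ) < k)

lemma Fk_min (n k : ℕ) : Fk n k = Fk n (min k n) := by
  ext i; simp only [Fk, mem_filter, mem_univ, true_and, Nat.lt_min]
  exact ⟨fun h => ⟨h, i.isLt⟩, fun h => h.1⟩

lemma topSum_eq (n : ℕ) (x : Fin n → ℝ) (k : ℕ) :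
    topSum x k = ∑ i ∈ Fk n k, sortDesc x i := rfl

lemma topSum_min {n : ℕ} (x : Fin n → ℝ) (k : ℕ) : topSum x k = topSum x (min k n) := by
  rw [topSum_eq, topSum_eq, Fk_min]

lemma Fk_eq_map (n k : ℕ) (h : k ≤ n) :
    Fk n k = Finset.map (Fin.castLEEmb h) Finset.univ := by
  ext i
  simp only [Fk, mem_filter, mem_univ, true_and, Finset.mem_map]
  constructor
  · intro hi
    exact ⟨⟨i, hi⟩, rfl⟩
  · rintro ⟨j, -, rfl⟩
    simpa using j.isLt

lemma Fk_card (n k : ℕ) (h : k ≤ n) : (Fk n k).card = k := by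
  rw [Fk_eq_map n k h]; simp

lemma image_orderEmbOfFin (n m : ℕ) (T : Finset (Fin n)) (hc : T.card = m) :
    Finset.image (fun i : Fin m => (T.orderEmbOfFin hc i : Fin n)) univ = T := by
  ext j
  simp only [Finset.mem_image, mem_univ, true_and]
  constructor
  · rintro ⟨i, rfl⟩; exact Finset.orderEmbOfFin_mem T hc i
  · intro hj
    refine ⟨(T.orderIsoOfFin hc).symm ⟨j, hj⟩, ?_⟩
    have h1 := T.orderIsoOfFin hc |>.apply_symm_apply ⟨j, hj⟩
    have h2 : (T.orderEmbOfFin hc) ((T.orderIsoOfFin hc).symm ⟨j, hj⟩) =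
        ((T.orderIsoOfFin hc) ((T.orderIsoOfFin hc).symm ⟨j, hj⟩) : Fin n) := rfl
    rw [h2, h1]

lemma sum_le_top_of_antitone {n : ℕ} (s : Fin n → ℝ) (hs : Antitone s) (T : Finset (Fin n)) :
    ∑ i ∈ T, s i ≤ ∑ i ∈ Fk n T.card, s i := by
  have hm : T.card ≤ n := by simpa using Finset.card_le_card (Finset.subset_univ T)
  set m := T.card with hmdef
  have hc : T.card = m := hmdef.symm
  have hle : ∀ t : ℕ, ∀ ht : t < m, t ≤ ((T.orderEmbOfFin hc ⟨t, ht⟩ : Fin n) : ℕ) := by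
    intro t
    induction t with
    | zero => intro ht; exact Nat.zero_le _
    | succ t ih =>
        intro ht
        have ht' : t < m := Nat.lt_of_succ_lt ht
        have hlt : (T.orderEmbOfFin hc ⟨t, ht'⟩) < T.orderEmbOfFin hc ⟨t + 1, ht⟩ := by
          apply (T.orderEmbOfFin hc).strictMono
          exact Fin.mk_lt_mk.mpr (Nat.lt_succ_self t)
        have h3 := ih ht'
        have hlt' : ((T.orderEmbOfFin hc ⟨t, ht'⟩ : Fin n) : ℕ) <
            ((T.orderEmbOfFin hc ⟨t + 1, ht⟩ : Fin n) : ℕ) := hlt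
        omega
  have h1 : ∑ i ∈ T, s i = ∑ i : Fin m, s (T.orderEmbOfFin hc i) := by
    conv_lhs => rw [← image_orderEmbOfFin n m T hc]
    exact Finset.sum_image (fun a _ b _ hab => (T.orderEmbOfFin hc).injective hab)
  have h2 : ∑ i ∈ Fk n m, s i = ∑ i : Fin m, s (Fin.castLE hm i) := by
    rw [Fk_eq_map n m hm, Finset.sum_map]; rfl
  rw [h1, h2]
  apply Finset.sum_le_sum
  intro i _
  exact hs (hle i.1 i.2)

lemma sum_subset_le_topSum {n : ℕ} (x : Fin n → ℝ) (T : Finset (Fin n)) :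
    ∑ i ∈ T, x i ≤ topSum x T.card := by
  classical
  set σ := sdPerm x
  have himg : (T.image σ.symm).image (fun i => σ i) = T := by
    rw [Finset.image_image]
    simp [Function.comp]
  have hcard : (T.image σ.symm).card = T.card := Finset.card_image_of_injective _ σ.symm.injective
  have h1 : ∑ i ∈ T, x i = ∑ i ∈ T.image σ.symm, x (σ i) := by
    conv_lhs => rw [← himg]
    exact Finset.sum_image (fun a _ b _ hab => σ.injective hab)
  have h2 : ∑ i ∈ T.image σ.symm, x (σ i) = ∑ i ∈ T.image σ.symm, sortDesc x i := by
    simp [sortDesc_eq, σ]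
  rw [h1, h2, ← hcard]
  have := sum_le_top_of_antitone (sortDesc x) (sortDesc_antitone x) (T.image σ.symm)
  rw [topSum_eq]
  exact this

lemma topSum_as_image {n : ℕ} (x : Fin n → ℝ) (k : ℕ) :
    topSum x k = ∑ i ∈ (Fk n (min k n)).image (fun i => sdPerm x i), x i := by
  rw [topSum_min, topSum_eq]
  rw [Finset.sum_image (fun a _ b _ hab => (sdPerm x).injective hab)]
  simp [sortDesc_eq]

lemma maj_refl {n : ℕ} (a : Fin n → ℝ) : Maj a a := fun _ => le_refl _

lemma maj_trans {n : ℕ} {a b c : Fin n → ℝ} (h1 : Maj a b) (h2 : Maj b c) : Maj a c :=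
  fun k => le_trans (h1 k) (h2 k)

lemma dot_le_topSum {n : ℕ} (x t : Fin n → ℝ) (m : ℕ) (hm : m ≤ n)
    (ht0 : ∀ j, 0 ≤ t j) (ht1 : ∀ j, t j ≤ 1) (hts : ∑ j, t j = (m : ℝ)) :
    ∑ j, x j * t j ≤ topSum x m := by
  classical
  set σ := sdPerm x
  set s := sortDesc x with hs
  have hsd : ∀ j, s j = x (σ j) := fun j => rfl
  -- rewrite as sorted
  have h1 : ∑ j, x j * t j = ∑ j, s j * (t (σ j)) := by
    rw [← Equiv.sum_comp σ (fun j => x j * t j)]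
    rfl
  set u : Fin n → ℝ := fun j => t (σ j) with hu
  have hu0 : ∀ j, 0 ≤ u j := fun j => ht0 _
  have hu1 : ∀ j, u j ≤ 1 := fun j => ht1 _
  have hus : ∑ j, u j = (m : ℝ) := by
    rw [hu, Equiv.sum_comp σ t]; exact hts
  rw [h1, topSum_eq]
  -- now show ∑ s j * u j ≤ ∑_{j ∈ Fk n m} s j
  rcases Nat.lt_or_ge m n with hmn | hmn
  · -- pivot
    set θ := s ⟨m, hmn⟩ with hθ
    have key : ∑ j, (s j - θ) * u j ≤ ∑ j ∈ Fk n m, (s j - θ) := by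
      have hsplit : ∑ j, (s j - θ) * u j =
          ∑ j ∈ Fk n m, (s j - θ) * u j + ∑ j ∈ (Fk n m)ᶜ, (s j - θ) * u j := by
        rw [Finset.sum_add_sum_compl]
      rw [hsplit]
      have hA : ∑ j ∈ Fk n m, (s j - θ) * u j ≤ ∑ j ∈ Fk n m, (s j - θ) := by
        apply Finset.sum_le_sum
        intro j hj
        have hjm : (j : ℕ) < m := by simpa [Fk] using hj
        have hsj : θ ≤ s j := by
          apply sortDesc_antitone x
          exact Fin.le_def.mpr (by simp; omega)
        nlinarith [hu1 j, hu0 j]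
      have hB : ∑ j ∈ (Fk n m)ᶜ, (s j - θ) * u j ≤ 0 := by
        apply Finset.sum_nonpos
        intro j hj
        have hjm : ¬ ((j : ℕ) < m) := by simpa [Fk] using hj
        have hsj : s j ≤ θ := by
          apply sortDesc_antitone x
          exact Fin.le_def.mpr (by simp; omega)
        nlinarith [hu0 j]
      linarith
    have hexp1 : ∑ j, s j * u j = ∑ j, (s j - θ) * u j + θ * (m : ℝ) := by
      rw [← hus, Finset.mul_sum, ← Finset.sum_add_distrib]
      apply Finset.sum_congr rfl
      intro j _
      ring
    have hexp2 : ∑ j ∈ Fk n m, s j = ∑ j ∈ Fk n m, (s j - θ) + θ * (m : ℝ) := by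
      have hc : ((Fk n m).card : ℝ) = (m : ℝ) := by rw [Fk_card n m (le_of_lt hmn)]
      rw [Finset.sum_sub_distrib]
      simp [hc]
      ring
    rw [hexp1, hexp2]
    linarith
  · -- m ≥ n: all u j = 1
    have hall : ∀ j, u j = 1 := by
      by_contra hcon
      push_neg at hcon
      obtain ⟨j0, hj0⟩ := hcon
      have hlt : u j0 < 1 := lt_of_le_of_ne (hu1 j0) hj0
      have : ∑ j, u j < ∑ j : Fin n, (1 : ℝ) := by
        apply Finset.sum_lt_sum (fun j _ => hu1 j) ⟨j0, mem_univ _, hlt⟩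
      simp at this
      rw [hus] at this
      have : (m : ℝ) < n := this
      exact absurd (Nat.cast_le.mpr hmn) (not_le.mpr this)
    have hFk : Fk n m = univ := by
      ext j; simp [Fk]; omega
    rw [hFk]
    apply le_of_eq
    apply Finset.sum_congr rfl
    intro j _
    have h4 := hall j
    rw [show u j = t (σ j) from rfl] at h4
    rw [h4, mul_one]

lemma abel_ineq (c d : ℕ → ℝ) (hc : ∀ i, c (i + 1) ≤ c i)
    (hD : ∀ k, 0 ≤ ∑ i ∈ Finset.range k, d i) :
    ∀ m, c m * (∑ i ∈ Finset.range (m + 1), d i) ≤ ∑ i ∈ Finset.range (m + 1), c i * d i := by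
  intro m
  induction m with
  | zero => simp
  | succ m ih =>
      rw [Finset.sum_range_succ (f := d), Finset.sum_range_succ (f := fun i => c i * d i)]
      have h1 := hD (m + 1)
      have h2 := hc m
      nlinarith [ih]

lemma karamata_sorted {n : ℕ} (f : ℝ → ℝ) (hf : ConvexOn ℝ (Set.Ici 0) f)
    (a b : Fin n → ℝ) (haA : Antitone a) (hbA : Antitone b)
    (ha0 : ∀ i, 0 ≤ a i) (hb0 : ∀ i, 0 ≤ b i)
    (hmaj : ∀ k : ℕ, ∑ i ∈ Fk n k, b i ≤ ∑ i ∈ Fk n k, a i)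
    (hsum : ∑ i, b i = ∑ i, a i) :
    ∑ i, f (b i) ≤ ∑ i, f (a i) := by
  classical
  set I : Finset (Fin n) := univ.filter (fun i => ¬ (a i = b i)) with hI
  by_cases hIe : I = ∅
  · apply le_of_eq
    apply Finset.sum_congr rfl
    intro i _
    have : a i = b i := by
      by_contra hcon
      have : i ∈ I := by simp [hI, hcon]
      rw [hIe] at this
      exact absurd this (Finset.notMem_empty i)
    rw [this]
  have hIne : I.Nonempty := Finset.nonempty_of_ne_empty hIe
  have hn : 0 < n := hIne.elim (fun i _ => i.pos)
  set sl : Fin n → ℝ := fun i => (f (a i) - f (b i)) / (a i - b i) with hsl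
  have hsym : ∀ u v : ℝ, (f u - f v) / (u - v) = (f v - f u) / (v - u) := by
    intro u v
    rw [← neg_div_neg_eq]
    ring_nf
  -- slope is expressed via min/max
  have hslmm : ∀ i : Fin n, i ∈ I →
      sl i = (f (max (a i) (b i)) - f (min (a i) (b i))) / (max (a i) (b i) - min (a i) (b i)) := by
    intro i hi
    rcases le_total (a i) (b i) with h | h
    · rw [max_eq_right h, min_eq_left h, hsl]
      exact hsym _ _
    · rw [max_eq_left h, min_eq_right h]
  -- slope antitone on I
  have hslmono : ∀ i j : Fin n, i ≤ j → i ∈ I → j ∈ I → sl j ≤ sl i := by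
    intro i j hij hiI hjI
    have hiab : a i ≠ b i := by simpa [hI] using hiI
    have hjab : a j ≠ b j := by simpa [hI] using hjI
    set p1 := min (a i) (b i); set q1 := max (a i) (b i)
    set p2 := min (a j) (b j); set q2 := max (a j) (b j)
    have hp1q1 : p1 < q1 := min_lt_max.mpr hiab
    have hp2q2 : p2 < q2 := min_lt_max.mpr hjab
    have hpp : p2 ≤ p1 := min_le_min (haA hij) (hbA hij)
    have hqq : q2 ≤ q1 := max_le_max (haA hij) (hbA hij)
    have hp10 : (0:ℝ) ≤ p1 := le_min (ha0 i) (hb0 i)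
    have hp20 : (0:ℝ) ≤ p2 := le_min (ha0 j) (hb0 j)
    have hq10 : (0:ℝ) ≤ q1 := le_trans hp10 hp1q1.le
    have hq20 : (0:ℝ) ≤ q2 := le_trans hp20 hp2q2.le
    rw [hslmm i hiI, hslmm j hjI]
    have step1 : (f q2 - f p2) / (q2 - p2) ≤ (f q1 - f p2) / (q1 - p2) :=
      hf.secant_mono (Set.mem_Ici.mpr hp20) (Set.mem_Ici.mpr hq20) (Set.mem_Ici.mpr hq10)
        (ne_of_gt hp2q2) (ne_of_gt (lt_of_lt_of_le hp2q2 hqq)) hqq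
    have step2 : (f q1 - f p2) / (q1 - p2) ≤ (f q1 - f p1) / (q1 - p1) := by
      have h2 := hf.secant_mono (Set.mem_Ici.mpr hq10) (Set.mem_Ici.mpr hp20)
        (Set.mem_Ici.mpr hp10) (ne_of_lt (lt_of_le_of_lt hpp hp1q1)) (ne_of_lt hp1q1) hpp
      calc (f q1 - f p2) / (q1 - p2) = (f p2 - f q1) / (p2 - q1) := hsym _ _
        _ ≤ (f p1 - f q1) / (p1 - q1) := h2
        _ = (f q1 - f p1) / (q1 - p1) := hsym _ _
    exact le_trans step1 step2
  set i0 := I.min' hIne with hi0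
  have hi0I : i0 ∈ I := I.min'_mem hIne
  set J : Fin n → Finset (Fin n) := fun i => insert i0 (I.filter (fun j => j ≤ i)) with hJ
  have hJne : ∀ i, ((J i).image sl).Nonempty :=
    fun i => (Finset.insert_nonempty _ _).image sl
  set c' : Fin n → ℝ := fun i => ((J i).image sl).min' (hJne i) with hc'
  have hc'anti : Antitone c' := by
    intro i j hij
    apply Finset.min'_subset
    apply Finset.image_subset_image
    apply Finset.insert_subset_insert
    intro x hx
    simp only [Finset.mem_filter] at hx ⊢
    exact ⟨hx.1, le_trans hx.2 hij⟩
  have hc'eq : ∀ i ∈ I, c' i = sl i := by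
    intro i hi
    apply le_antisymm
    · apply Finset.min'_le
      apply Finset.mem_image_of_mem
      simp [hJ, Finset.mem_insert, Finset.mem_filter, hi]
    · apply Finset.le_min'
      intro y hy
      obtain ⟨j, hj, rfl⟩ := Finset.mem_image.mp hy
      rcases Finset.mem_insert.mp hj with rfl | hj2
      · exact hslmono i0 i (I.min'_le i hi) hi0I hi
      · obtain ⟨hjI, hji⟩ := Finset.mem_filter.mp hj2
        exact hslmono j i hji hjI hi
  have hpt : ∀ i, c' i * (a i - b i) ≤ f (a i) - f (b i) := by
    intro i
    by_cases hab : a i = b i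
    · rw [hab]; simp
    · have hiI : i ∈ I := by simp [hI, hab]
      rw [hc'eq i hiI, hsl]
      rw [div_mul_cancel₀ _ (sub_ne_zero.mpr hab)]
  -- Abel summation
  set cN : ℕ → ℝ := fun t => c' ⟨min t (n - 1), by omega⟩ with hcN
  set dN : ℕ → ℝ := fun t => if h : t < n then a ⟨t, h⟩ - b ⟨t, h⟩ else 0 with hdN
  have hsumd : ∀ k, ∑ t ∈ Finset.range k, dN t = (∑ i ∈ Fk n k, a i) - (∑ i ∈ Fk n k, b i) := by
    intro k
    induction k with
    | zero =>
        have : Fk n 0 = ∅ := by ext i; simp [Fk]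
        simp [this]
    | succ k ih =>
        rw [Finset.sum_range_succ, ih]
        by_cases hkn : k < n
        · have hins : Fk n (k + 1) = insert ⟨k, hkn⟩ (Fk n k) := by
            ext i
            simp only [Fk, mem_filter, mem_univ, true_and, Finset.mem_insert]
            constructor
            · intro h
              rcases Nat.lt_or_ge (i : ℕ) k with h2 | h2
              · exact Or.inr h2
              · left; apply Fin.ext; simp; omega
            · rintro (rfl | h)
              · simp
              · omega
          have hnotmem : (⟨k, hkn⟩ : Fin n) ∉ Fk n k := by simp [Fk]
          rw [hins, Finset.sum_insert hnotmem, Finset.sum_insert hnotmem]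
          have : dN k = a ⟨k, hkn⟩ - b ⟨k, hkn⟩ := by simp [hdN, hkn]
          rw [this]; ring
        · have heq : Fk n (k + 1) = Fk n k := by
            ext i
            simp only [Fk, mem_filter, mem_univ, true_and]
            have := i.isLt
            omega
          have : dN k = 0 := by simp [hdN, hkn]
          rw [heq, this]; ring
  have hD : ∀ k, 0 ≤ ∑ t ∈ Finset.range k, dN t := by
    intro k
    rw [hsumd k]
    have := hmaj k
    linarith
  have hcmono : ∀ t, cN (t + 1) ≤ cN t := by
    intro t
    apply hc'anti
    apply Fin.mk_le_mk.mpr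
    omega
  have habel := abel_ineq cN dN hcmono hD (n - 1)
  have hn1 : n - 1 + 1 = n := by omega
  rw [hn1] at habel
  have hFkn : Fk n n = (univ : Finset (Fin n)) := by
    ext i; simp [Fk, i.isLt]
  have hdzero : ∑ t ∈ Finset.range n, dN t = 0 := by
    rw [hsumd n, hFkn, hsum]; ring
  rw [hdzero, mul_zero] at habel
  have hconv : ∑ t ∈ Finset.range n, cN t * dN t = ∑ i : Fin n, c' i * (a i - b i) := by
    rw [← Fin.sum_univ_eq_sum_range]
    apply Finset.sum_congr rfl
    intro i _
    have h1 : cN (i : ℕ) = c' i := by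
      simp only [hcN]
      congr 1
      apply Fin.ext
      simp
      omega
    have h2 : dN (i : ℕ) = a i - b i := by
      simp [hdN, i.isLt]
    rw [h1, h2]
  rw [hconv] at habel
  have hfinal : ∑ i : Fin n, c' i * (a i - b i) ≤ ∑ i, (f (a i) - f (b i)) :=
    Finset.sum_le_sum (fun i _ => hpt i)
  rw [Finset.sum_sub_distrib] at hfinal
  linarith

lemma xlogx_convex : ConvexOn ℝ (Set.Ici 0) (fun x : ℝ => x * Real.logb 2 x) := by
  have h2 : (0:ℝ) < Real.log 2 := Real.log_pos (by norm_num)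
  have h3 := Real.convexOn_mul_log.smul (le_of_lt (inv_pos.mpr h2))
  have hfun : (fun x : ℝ => x * Real.logb 2 x) = fun x => (Real.log 2)⁻¹ • (x * Real.log x) := by
    funext x
    simp only [Pi.smul_apply, smul_eq_mul, Real.logb]
    ring
  rw [hfun]; exact h3

lemma shannon_le_of_maj {n : ℕ} (a b : Fin n → ℝ) (hpa : IsProbVec a) (hpb : IsProbVec b)
    (h : Maj b a) : shannon a ≤ shannon b := by
  set f : ℝ → ℝ := fun x => x * Real.logb 2 x with hfdef
  have key : ∑ i, f (b i) ≤ ∑ i, f (a i) := by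
    have h1 : ∑ i, f (sortDesc b i) ≤ ∑ i, f (sortDesc a i) := by
      apply karamata_sorted f xlogx_convex (sortDesc a) (sortDesc b)
        (sortDesc_antitone a) (sortDesc_antitone b)
        (fun i => hpa.1 _) (fun i => hpb.1 _) h
      have hsa := sum_sortDesc a id
      have hsb := sum_sortDesc b id
      simp only [id] at hsa hsb
      rw [hsa, hsb, hpa.2, hpb.2]
    rw [sum_sortDesc a f, sum_sortDesc b f] at h1
    exact h1
  have hA : shannon a = -∑ i, f (a i) := rfl
  have hB : shannon b = -∑ i, f (b i) := rfl
  rw [hA, hB]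
  linarith

lemma eig_probvec {n : ℕ} (ρ : Matrix (Fin n) (Fin n) ℂ) (hρ : ρ.PosSemidef)
    (htr : ρ.trace = 1) : IsProbVec hρ.isHermitian.eigenvalues := by
  constructor
  · exact fun i => hρ.eigenvalues_nonneg i
  · set U : Matrix (Fin n) (Fin n) ℂ :=
      (Matrix.IsHermitian.eigenvectorUnitary hρ.isHermitian : Matrix (Fin n) (Fin n) ℂ) with hU
    have hspec := hρ.isHermitian.spectral_theorem
    have hstar : star U * U = 1 :=
      Matrix.mem_unitaryGroup_iff'.mp (Matrix.IsHermitian.eigenvectorUnitary hρ.isHermitian).2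
    have htrace : ρ.trace =
        (Matrix.diagonal (RCLike.ofReal ∘ hρ.isHermitian.eigenvalues) : Matrix (Fin n) (Fin n) ℂ).trace := by
      conv_lhs => rw [hspec]
      rw [Unitary.conjStarAlgAut_apply, Matrix.trace_mul_cycle]
      rw [← hU, hstar, Matrix.one_mul]
    rw [htr] at htrace
    have hdiag : (Matrix.diagonal (RCLike.ofReal ∘ hρ.isHermitian.eigenvalues) : Matrix (Fin n) (Fin n) ℂ).trace
        = ∑ i, ((hρ.isHermitian.eigenvalues i : ℝ) : ℂ) := by
      rw [Matrix.trace_diagonal]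
      rfl
    rw [hdiag] at htrace
    have : ((∑ i, hρ.isHermitian.eigenvalues i : ℝ) : ℂ) = 1 := by
      push_cast
      exact htrace.symm
    exact_mod_cast this

lemma outcome_maj {n : ℕ} (ρ : Matrix (Fin n) (Fin n) ℂ) (hρ : ρ.PosSemidef)
    (w : Fin n → (Fin n → ℂ)) (hw : IsONB w) :
    Maj (outcome ρ w) hρ.isHermitian.eigenvalues := by
  classical
  set L := hρ.isHermitian.eigenvalues with hL
  set U : Matrix (Fin n) (Fin n) ℂ :=
    (Matrix.IsHermitian.eigenvectorUnitary hρ.isHermitian : Matrix (Fin n) (Fin n) ℂ) with hU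
  have hUU : U * star U = 1 :=
    Matrix.mem_unitaryGroup_iff.mp (Matrix.IsHermitian.eigenvectorUnitary hρ.isHermitian).2
  set B : Matrix (Fin n) (Fin n) ℂ := Matrix.of (fun i t => star (w i t)) with hB
  set M : Matrix (Fin n) (Fin n) ℂ := B * U with hM
  have hBB : B * Bᴴ = 1 := by
    ext i j
    have hwd := hw i j
    simp only [Matrix.mul_apply, Matrix.conjTranspose_apply, hB, Matrix.of_apply]
    rw [Matrix.one_apply]
    rw [← hwd]
    simp only [dotProduct, Pi.star_apply]
    apply Finset.sum_congr rfl
    intro t _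
    simp
  have hMM : M * Mᴴ = 1 := by
    rw [hM, Matrix.conjTranspose_mul, ← Matrix.mul_assoc, Matrix.mul_assoc B U Uᴴ]
    rw [show U * Uᴴ = 1 from hUU]
    rw [Matrix.mul_one, hBB]
  have hMM' : Mᴴ * M = 1 := mul_eq_one_comm.mp hMM
  -- row sums
  have hsq : ∀ z : ℂ, z * star z = ((Complex.normSq z : ℝ) : ℂ) := fun z => by
    rw [show star z = (starRingEnd ℂ) z from rfl, Complex.mul_conj]
  have hrow : ∀ i, ∑ j, Complex.normSq (M i j) = 1 := by
    intro i
    have h1 : (M * Mᴴ) i i = 1 := by rw [hMM]; simp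
    rw [Matrix.mul_apply] at h1
    have h2 : ∀ j, M i j * Mᴴ j i = ((Complex.normSq (M i j) : ℝ) : ℂ) := by
      intro j
      rw [Matrix.conjTranspose_apply, hsq]
    rw [Finset.sum_congr rfl (fun j _ => h2 j)] at h1
    have h3 : ((∑ j, Complex.normSq (M i j) : ℝ) : ℂ) = 1 := by push_cast; exact h1
    exact_mod_cast h3
  have hcol : ∀ j, ∑ i, Complex.normSq (M i j) = 1 := by
    intro j
    have h1 : (Mᴴ * M) j j = 1 := by rw [hMM']; simp
    rw [Matrix.mul_apply] at h1
    have h2 : ∀ i, Mᴴ j i * M i j = ((Complex.normSq (M i j) : ℝ) : ℂ) := by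
      intro i
      rw [Matrix.conjTranspose_apply, mul_comm, hsq]
    rw [Finset.sum_congr rfl (fun i _ => h2 i)] at h1
    have h3 : ((∑ i, Complex.normSq (M i j) : ℝ) : ℂ) = 1 := by push_cast; exact h1
    exact_mod_cast h3
  -- outcome formula
  have hq : ∀ i, outcome ρ w i = ∑ j, L j * Complex.normSq (M i j) := by
    intro i
    have hspec := hρ.isHermitian.spectral_theorem
    have h0 : ρ *ᵥ w i = U *ᵥ ((Matrix.diagonal (RCLike.ofReal ∘ L)) *ᵥ (Uᴴ *ᵥ w i)) := by
      rw [Matrix.mulVec_mulVec, Matrix.mulVec_mulVec]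
      conv_lhs => rw [hspec]
      rfl
    have h1 : star (w i) ⬝ᵥ (ρ *ᵥ w i) =
        (star (w i) ᵥ* U) ⬝ᵥ ((Matrix.diagonal (RCLike.ofReal ∘ L)) *ᵥ (Uᴴ *ᵥ w i)) := by
      rw [h0, Matrix.dotProduct_mulVec]
    have hvm : ∀ j, (star (w i) ᵥ* U) j = M i j := by
      intro j
      simp only [Matrix.vecMul, dotProduct, Pi.star_apply, hM, hB, Matrix.mul_apply,
        Matrix.of_apply]
    have hUHw : ∀ j, (Uᴴ *ᵥ w i) j = star (M i j) := by
      intro j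
      simp only [Matrix.mulVec, dotProduct, Matrix.conjTranspose_apply, hM, hB,
        Matrix.mul_apply, Matrix.of_apply, star_sum, star_mul', star_star]
      apply Finset.sum_congr rfl
      intro t _
      ring
    have h2 : star (w i) ⬝ᵥ (ρ *ᵥ w i) = ∑ j, ((L j : ℂ) * (Complex.normSq (M i j) : ℂ)) := by
      rw [h1]
      simp only [dotProduct]
      apply Finset.sum_congr rfl
      intro j _
      rw [hvm j, Matrix.mulVec_diagonal, hUHw j]
      show M i j * (((L j : ℝ) : ℂ) * star (M i j)) = _
      rw [show M i j * (((L j : ℝ) : ℂ) * star (M i j))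
          = ((L j : ℝ) : ℂ) * (M i j * star (M i j)) from by ring, hsq]
    rw [outcome, h2, Complex.re_sum]
    apply Finset.sum_congr rfl
    intro j _
    rw [show ((L j : ℂ) * (Complex.normSq (M i j) : ℂ)) = (((L j * Complex.normSq (M i j)) : ℝ) : ℂ) by push_cast; ring]
    rw [Complex.ofReal_re]
  -- majorization
  intro k
  set q := outcome ρ w with hqdef
  set m := min k n with hm
  have hmn : m ≤ n := min_le_right k n
  set T : Finset (Fin n) := (Fk n m).image (fun i => sdPerm q i) with hT
  have hTcard : T.card = m := by
    rw [hT, Finset.card_image_of_injective _ (sdPerm q).injective, Fk_card n m hmn]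
  have htop : topSum q k = ∑ i ∈ T, q i := topSum_as_image q k
  set t : Fin n → ℝ := fun j => ∑ i ∈ T, Complex.normSq (M i j) with ht
  have ht0 : ∀ j, 0 ≤ t j := fun j => Finset.sum_nonneg (fun i _ => Complex.normSq_nonneg _)
  have ht1 : ∀ j, t j ≤ 1 := by
    intro j
    rw [← hcol j]
    apply Finset.sum_le_sum_of_subset_of_nonneg (Finset.subset_univ T)
    intro i _ _
    exact Complex.normSq_nonneg _
  have hts : ∑ j, t j = (m : ℝ) := by
    rw [ht]
    rw [Finset.sum_comm]
    rw [Finset.sum_congr rfl (fun i _ => hrow i)]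
    simp [hTcard]
  have hsum : ∑ i ∈ T, q i = ∑ j, L j * t j := by
    rw [Finset.sum_congr rfl (fun i (_ : i ∈ T) => hq i)]
    rw [Finset.sum_comm]
    apply Finset.sum_congr rfl
    intro j _
    rw [ht, Finset.mul_sum]
  rw [htop, hsum]
  calc ∑ j, L j * t j ≤ topSum L m := dot_le_topSum L t m hmn ht0 ht1 hts
    _ = topSum L k := by rw [hm, ← topSum_min]

lemma std_onb (n : ℕ) : IsONB (fun i : Fin n => (Pi.single i (1:ℂ))) := by
  intro i j
  have hstar : star (Pi.single i (1:ℂ) : Fin n → ℂ) = Pi.single i (1:ℂ) := by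
    funext t
    rw [Pi.star_apply]
    rcases eq_or_ne t i with rfl | h
    · simp
    · simp [Pi.single_eq_of_ne h]
  rw [hstar, single_dotProduct, one_mul]
  change (Pi.single j (1:ℂ) : Fin n → ℂ) i = if i = j then (1:ℂ) else 0
  rw [Pi.single_apply]

lemma diagVec_eq_outcome {n : ℕ} (ρ : Matrix (Fin n) (Fin n) ℂ) :
    diagVec ρ = outcome ρ (fun i : Fin n => (Pi.single i (1:ℂ))) := by
  funext i
  have hstar : star (Pi.single i (1:ℂ) : Fin n → ℂ) = Pi.single i (1:ℂ) := by
    funext t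
    rw [Pi.star_apply]
    rcases eq_or_ne t i with rfl | h
    · simp
    · simp [Pi.single_eq_of_ne h]
  show (ρ i i).re = (star (Pi.single i (1:ℂ)) ⬝ᵥ (ρ *ᵥ Pi.single i (1:ℂ))).re
  rw [hstar, single_dotProduct, one_mul, Matrix.mulVec_single]
  simp


/-- With outcome distributions `p_0, …, p_{k-1}` of `k` von Neumann
measurements and iterated majorization joins `c j = d ∨ p_0 ∨ … ∨ p_j`, one has
`C_r(ρ) ≥ S(d) − S(c j)` for every `j`, and the entropies `S(c j)` are
nonincreasing in `j`. -/
theorem stmt5 {n k : ℕ} (hk : 0 < k) (ρ : Matrix (Fin n) (Fin n) ℂ)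
    (hρ : ρ.PosSemidef) (htr : ρ.trace = 1)
    (ψ : Fin k → Fin n → (Fin n → ℂ)) (hψ : ∀ j, IsONB (ψ j))
    (c : Fin k → (Fin n → ℝ))
    (hc0 : IsMajJoin (diagVec ρ) (outcome ρ (ψ ⟨0, hk⟩)) (c ⟨0, hk⟩))
    (hcs : ∀ j : Fin k, ∀ h : (j : ℕ) + 1 < k,
      IsMajJoin (c j) (outcome ρ (ψ ⟨(j : ℕ) + 1, h⟩)) (c ⟨(j : ℕ) + 1, h⟩)) :
    (∀ j : Fin k, shannon (diagVec ρ) - shannon (c j)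
        ≤ shannon (diagVec ρ) - shannon hρ.isHermitian.eigenvalues) ∧
    (∀ j j' : Fin k, j ≤ j' → shannon (c j') ≤ shannon (c j)) := by
  classical
  set L := hρ.isHermitian.eigenvalues with hLdef
  have hL : IsProbVec L := eig_probvec ρ hρ htr
  have hd : Maj (diagVec ρ) L := by
    rw [diagVec_eq_outcome ρ]
    exact outcome_maj ρ hρ _ (std_onb n)
  have hp : ∀ j, Maj (outcome ρ (ψ j)) L := fun j => outcome_maj ρ hρ _ (hψ j)
  have key : ∀ m : ℕ, ∀ h : m < k, IsProbVec (c ⟨m, h⟩) ∧ Maj (c ⟨m, h⟩) L := by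
    intro m
    induction m with
    | zero => intro h; exact ⟨hc0.1, hc0.2.2.2 L hL hd (hp _)⟩
    | succ m ih =>
        intro h
        have hm : m < k := by omega
        have H := hcs ⟨m, hm⟩ h
        exact ⟨H.1, H.2.2.2 L hL (ih hm).2 (hp _)⟩
  have chain : ∀ (m : ℕ) (hm : m < k) (t : ℕ) (h' : m + t < k),
      Maj (c ⟨m, hm⟩) (c ⟨m + t, h'⟩) := by
    intro m hm t
    induction t with
    | zero => intro h'; exact maj_refl _
    | succ t ih =>
        intro h'
        have h2 : m + t < k := by omega
        have H := hcs ⟨m + t, h2⟩ h'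
        exact maj_trans (ih h2) H.2.1
  constructor
  · intro j
    have hj := key j.val j.isLt
    have h1 : shannon L ≤ shannon (c j) := shannon_le_of_maj L (c j) hL hj.1 hj.2
    linarith
  · intro j j' hle
    have hvv : (j : ℕ) ≤ (j' : ℕ) := hle
    have hEq : j' = ⟨j.val + (j'.val - j.val), by omega⟩ := by
      apply Fin.ext; simp; omega
    have hmaj : Maj (c j) (c j') := by
      rw [hEq]
      exact chain j.val j.isLt (j'.val - j.val) (by omega)
    exact shannon_le_of_maj (c j') (c j) (key j'.val j'.isLt).1 (key j.val j.isLt).1 hmaj
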